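/- arXiv:2109.13741 — 2 statements merged into one kernel-verified Lean document; each statement's English description precedes it below -/
import Mathlib

section
/- Let (Ω, F, P) be a probability space, 𝒢 ⊆ F a sub-σ-algebra, and Y a square-integrable real random variable. Let I₁ and I₂ be nonempty Borel subsets of ℝ. Then, almost surely, Var(Y | 𝒢) ≥ (1/4) · min_{i ∈ {1,2}} P(Y ∈ I_i | 𝒢) · inf_{x₁ ∈ I₁, x₂ ∈ I₂} |x₁ − x₂|². -/
open MeasureTheory ProbabilityTheory

/-- The conditional variance `Var(X | m) = E[(X - E[X | m])² | m]`. -/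
noncomputable def condVar {Ω : Type*} {mΩ : MeasurableSpace Ω} (μ : Measure Ω)
    (m : MeasurableSpace Ω) (X : Ω → ℝ) : Ω → ℝ :=
  μ[fun ω => (X ω - (μ[X|m]) ω) ^ 2|m]

/-- The conditional probability `P(Y ∈ I | m) = E[1_{Y ∈ I} | m]`. -/
noncomputable def condProbMem {Ω : Type*} {mΩ : MeasurableSpace Ω} (μ : Measure Ω)
    (m : MeasurableSpace Ω) (Y : Ω → ℝ) (I : Set ℝ) : Ω → ℝ :=
  μ[(Y ⁻¹' I).indicator (fun _ => (1 : ℝ))|m]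

lemma memLp_condexp_two' {Ω : Type*} (m : MeasurableSpace Ω) [mΩ : MeasurableSpace Ω]
    (hm : m ≤ mΩ) (μ : Measure Ω) [IsProbabilityMeasure μ]
    {Y : Ω → ℝ} (hY : MemLp Y 2 μ) : MemLp (μ[Y|m]) 2 μ := by
  haveI : SigmaFinite (μ.trim hm) := (isFiniteMeasure_trim hm).toSigmaFinite
  set f : Lp ℝ 2 μ := hY.toLp Y with hf
  have hfY : (f : Ω → ℝ) =ᵐ[μ] Y := hY.coeFn_toLp
  have hg := Lp.memLp (↑(condExpL2 ℝ ℝ hm f) : Lp ℝ 2 μ)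
  refine hg.ae_eq ?_
  refine ae_eq_condExp_of_forall_setIntegral_eq hm (hY.integrable one_le_two) ?_ ?_ ?_
  · intro s _ _
    exact (hg.integrable one_le_two).integrableOn
  · intro s hs hμs
    rw [integral_condExpL2_eq (𝕜 := ℝ) hm f hs hμs.ne]
    exact setIntegral_congr_ae (hm s hs) (hfY.mono fun ω h _ => h)
  · exact aestronglyMeasurable_condExpL2 hm f

lemma stmt0_aux {Ω : Type*} (m : MeasurableSpace Ω) [mΩ : MeasurableSpace Ω]
    (hm : m ≤ mΩ) (μ : Measure Ω) [IsProbabilityMeasure μ]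
    (Y : Ω → ℝ) (hY : MemLp Y 2 μ)
    (I₁ I₂ : Set ℝ) (hI₁ : MeasurableSet I₁) (hI₂ : MeasurableSet I₂)
    (hne₁ : I₁.Nonempty) (hne₂ : I₂.Nonempty) :
    ∀ᵐ ω ∂μ,
      (1 / 4) * min (condProbMem μ m Y I₁ ω) (condProbMem μ m Y I₂ ω) *
          (sInf ((fun x₁ => sInf ((fun x₂ => |x₁ - x₂| ^ 2) '' I₂)) '' I₁))
        ≤ condVar μ m Y ω := by
  haveI : SigmaFinite (μ.trim hm) := (isFiniteMeasure_trim hm).toSigmaFinite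
  set D : ℝ := sInf ((fun x₁ => sInf ((fun x₂ => |x₁ - x₂| ^ 2) '' I₂)) '' I₁) with hD
  have hD0 : 0 ≤ D :=
    Real.sInf_nonneg (by
      rintro _ ⟨x₁, _, rfl⟩
      exact Real.sInf_nonneg (by rintro _ ⟨x₂, _, rfl⟩; exact sq_nonneg _))
  have hDle : ∀ x₁ ∈ I₁, ∀ x₂ ∈ I₂, D ≤ (x₁ - x₂) ^ 2 := by
    intro x₁ hx₁ x₂ hx₂
    have h1 : D ≤ sInf ((fun x₂ => |x₁ - x₂| ^ 2) '' I₂) :=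
      csInf_le ⟨0, by
        rintro _ ⟨y, _, rfl⟩
        exact Real.sInf_nonneg (by rintro _ ⟨x₂, _, rfl⟩; exact sq_nonneg _)⟩ ⟨x₁, hx₁, rfl⟩
    have h2 : sInf ((fun x₂ => |x₁ - x₂| ^ 2) '' I₂) ≤ |x₁ - x₂| ^ 2 :=
      csInf_le ⟨0, by rintro _ ⟨y, _, rfl⟩; exact sq_nonneg _⟩ ⟨x₂, hx₂, rfl⟩
    calc D ≤ |x₁ - x₂| ^ 2 := h1.trans h2
    _ = (x₁ - x₂) ^ 2 := sq_abs _
  set Z : Ω → ℝ := μ[Y|m] with hZdef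
  set U : Set ℝ := ⋃ x ∈ I₁, {c : ℝ | (x - c) ^ 2 < D / 4} with hU
  have hUopen : IsOpen U :=
    isOpen_biUnion fun x _ => isOpen_lt (by fun_prop) continuous_const
  set A : Set Ω := Z ⁻¹' Uᶜ with hA
  have hZsm : StronglyMeasurable[m] Z := stronglyMeasurable_condExp
  have hAm : MeasurableSet[m] A := hZsm.measurable hUopen.measurableSet.compl
  set g₁ : Ω → ℝ := (Y ⁻¹' I₁).indicator (fun _ => (1 : ℝ)) with hg₁def
  set g₂ : Ω → ℝ := (Y ⁻¹' I₂).indicator (fun _ => (1 : ℝ)) with hg₂def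
  obtain ⟨Y', hY'sm, hYY'⟩ := hY.aestronglyMeasurable
  have hind : ∀ (I : Set ℝ), MeasurableSet I →
      Integrable ((Y ⁻¹' I).indicator (fun _ => (1 : ℝ))) μ := by
    intro I hI
    refine ((integrable_const (1 : ℝ)).indicator (hY'sm.measurable hI)).congr ?_
    filter_upwards [hYY'] with ω h
    by_cases hmem : Y ω ∈ I <;> simp [Set.indicator_apply, Set.mem_preimage, h ▸ hmem, hmem]
  have hg₁ : Integrable g₁ μ := hind I₁ hI₁
  have hg₂ : Integrable g₂ μ := hind I₂ hI₂
  set g : Ω → ℝ := A.indicator g₁ + Aᶜ.indicator g₂ with hgdef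
  have hg : Integrable g μ :=
    (hg₁.indicator (hm _ hAm)).add (hg₂.indicator (hm _ hAm.compl))
  have hh : Integrable (fun ω => (Y ω - Z ω) ^ 2) μ := by
    have := (hY.sub (memLp_condexp_two' m hm μ hY)).integrable_sq
    simpa using this
  -- pointwise inequality
  have hpt : ∀ ω, (D / 4) * g ω ≤ (Y ω - Z ω) ^ 2 := by
    intro ω
    by_cases hω : ω ∈ A
    · have hgω : g ω = g₁ ω := by
        simp [hgdef, Set.indicator_of_mem hω,
          Set.indicator_of_notMem (by simpa using hω : ω ∉ Aᶜ)]
      rw [hgω]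
      by_cases hYI : Y ω ∈ I₁
      · have h1 : g₁ ω = 1 := by simp [hg₁def, Set.indicator_apply, Set.mem_preimage, hYI]
        rw [h1, mul_one]
        have hZU : Z ω ∉ U := hω
        by_contra hcon
        push_neg at hcon
        exact hZU (Set.mem_biUnion hYI (by simpa [sub_sq', sq] using hcon))
      · have h1 : g₁ ω = 0 := by simp [hg₁def, Set.indicator_apply, Set.mem_preimage, hYI]
        rw [h1, mul_zero]; exact sq_nonneg _
    · have hgω : g ω = g₂ ω := by
        simp [hgdef, Set.indicator_of_notMem hω,
          Set.indicator_of_mem (by simpa using hω : ω ∈ Aᶜ)]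
      rw [hgω]
      have hZU : Z ω ∈ U := by
        by_contra hc
        exact hω (by simpa [hA] using hc)
      obtain ⟨x₁, hx₁, hx₁c⟩ := Set.mem_iUnion₂.mp hZU
      by_cases hYI : Y ω ∈ I₂
      · have h1 : g₂ ω = 1 := by simp [hg₂def, Set.indicator_apply, Set.mem_preimage, hYI]
        rw [h1, mul_one]
        by_contra hcon
        push_neg at hcon
        have hDle' := hDle x₁ hx₁ (Y ω) hYI
        have hx₁c' : (x₁ - Z ω) ^ 2 < D / 4 := hx₁c
        nlinarith [sq_nonneg ((x₁ - Z ω) + (Y ω - Z ω))]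
      · have h1 : g₂ ω = 0 := by simp [hg₂def, Set.indicator_apply, Set.mem_preimage, hYI]
        rw [h1, mul_zero]; exact sq_nonneg _
  -- conditional expectation comparisons
  have h1 : μ[(fun ω => (D / 4) * g ω)|m] ≤ᵐ[μ] μ[(fun ω => (Y ω - Z ω) ^ 2)|m] :=
    condExp_mono (hg.const_mul _) hh (ae_of_all _ hpt)
  have h2 : μ[(fun ω => (D / 4) * g ω)|m] =ᵐ[μ] fun ω => (D / 4) * (μ[g|m]) ω := by
    have := condExp_smul (μ := μ) (m := m) ((D / 4 : ℝ)) g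
    exact this
  have h3 : μ[g|m] =ᵐ[μ] A.indicator (μ[g₁|m]) + Aᶜ.indicator (μ[g₂|m]) := by
    refine (condExp_add (hg₁.indicator (hm _ hAm)) (hg₂.indicator (hm _ hAm.compl)) m).trans ?_
    exact (condExp_indicator hg₁ hAm).add (condExp_indicator hg₂ hAm.compl)
  have hVar : condVar μ m Y = μ[(fun ω => (Y ω - Z ω) ^ 2)|m] := rfl
  filter_upwards [h1, h2, h3] with ω e1 e2 e3
  have hmin : min ((μ[g₁|m]) ω) ((μ[g₂|m]) ω)
      ≤ (A.indicator (μ[g₁|m]) + Aᶜ.indicator (μ[g₂|m])) ω := by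
    by_cases hω : ω ∈ A
    · simp only [Pi.add_apply, Set.indicator_of_mem hω,
        Set.indicator_of_notMem (by simpa using hω : ω ∉ Aᶜ), add_zero]
      exact min_le_left _ _
    · simp only [Pi.add_apply, Set.indicator_of_notMem hω,
        Set.indicator_of_mem (by simpa using hω : ω ∈ Aᶜ), zero_add]
      exact min_le_right _ _
  have key : (1 / 4 : ℝ) * min ((μ[g₁|m]) ω) ((μ[g₂|m]) ω) * D
      ≤ (μ[(fun ω => (Y ω - Z ω) ^ 2)|m]) ω := by
    calc (1 / 4 : ℝ) * min ((μ[g₁|m]) ω) ((μ[g₂|m]) ω) * D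
        = (D / 4) * min ((μ[g₁|m]) ω) ((μ[g₂|m]) ω) := by ring
      _ ≤ (D / 4) * (A.indicator (μ[g₁|m]) + Aᶜ.indicator (μ[g₂|m])) ω :=
          mul_le_mul_of_nonneg_left hmin (by positivity)
      _ = (D / 4) * (μ[g|m]) ω := by rw [e3]
      _ = (μ[(fun ω => (D / 4) * g ω)|m]) ω := e2.symm
      _ ≤ (μ[(fun ω => (Y ω - Z ω) ^ 2)|m]) ω := e1
  rw [hVar]
  exact key

theorem stmt0 {Ω : Type*} [mΩ : MeasurableSpace Ω] (μ : Measure Ω) [IsProbabilityMeasure μ]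
    (m : MeasurableSpace Ω) (hm : m ≤ mΩ)
    (Y : Ω → ℝ) (hY : MemLp Y 2 μ)
    (I₁ I₂ : Set ℝ) (hI₁ : MeasurableSet I₁) (hI₂ : MeasurableSet I₂)
    (hne₁ : I₁.Nonempty) (hne₂ : I₂.Nonempty) :
    ∀ᵐ ω ∂μ,
      (1 / 4) * min (condProbMem μ m Y I₁ ω) (condProbMem μ m Y I₂ ω) *
          (sInf ((fun x₁ => sInf ((fun x₂ => |x₁ - x₂| ^ 2) '' I₂)) '' I₁))
        ≤ condVar μ m Y ω :=
  stmt0_aux (mΩ := mΩ) m hm μ Y hY I₁ I₂ hI₁ hI₂ hne₁ hne₂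
end

section
/- Let d ≥ 1, r > 0, and n > 0 with n^{1/d} ≥ 4dr, and let W_n = [−n^{1/d}/2, n^{1/d}/2]^d. Then for every z ∈ ℝ^d with |z| ≤ r, the translation edge correction factor satisfies 0 ≤ n / |W_n ∩ (W_n + z)| − 1 ≤ 4dr · n^{−1/d}. -/
open MeasureTheory

/-- The cube `W_n = [-n^(1/d)/2, n^(1/d)/2]^d` of volume `n` in `ℝ^d`. -/
def cubeW (d : ℕ) (n : ℝ) : Set (EuclideanSpace ℝ (Fin d)) :=
  {x | ∀ i, |x i| ≤ n ^ ((1 : ℝ) / d) / 2}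

lemma aux_pow_sub_pow (a b : ℝ) (hb : 0 ≤ b) (hba : b ≤ a) :
    ∀ d : ℕ, a ^ (d + 1) - b ^ (d + 1) ≤ (d + 1 : ℝ) * (a - b) * a ^ d := by
  have ha : 0 ≤ a := hb.trans hba
  intro d
  induction d with
  | zero => norm_num
  | succ d ih =>
    have hbb : b ^ (d + 1) ≤ a ^ (d + 1) := pow_le_pow_left₀ hb hba _
    have h1 : a * (a ^ (d + 1) - b ^ (d + 1)) ≤ a * ((d + 1 : ℝ) * (a - b) * a ^ d) :=
      mul_le_mul_of_nonneg_left ih ha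
    have h2 : b ^ (d + 1) * (a - b) ≤ a ^ (d + 1) * (a - b) :=
      mul_le_mul_of_nonneg_right hbb (by linarith)
    push_cast
    calc a ^ (d + 1 + 1) - b ^ (d + 1 + 1)
        = a * (a ^ (d + 1) - b ^ (d + 1)) + b ^ (d + 1) * (a - b) := by ring
      _ ≤ a * ((d + 1 : ℝ) * (a - b) * a ^ d) + a ^ (d + 1) * (a - b) := by linarith
      _ = ((d : ℝ) + 1 + 1) * (a - b) * a ^ (d + 1) := by ring

set_option maxHeartbeats 1000000 in
theorem stmt8 {d : ℕ} (hd : 1 ≤ d) (r n : ℝ) (hr : 0 < r) (hn : 0 < n)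
    (h4dr : 4 * d * r ≤ n ^ ((1 : ℝ) / d))
    (z : EuclideanSpace ℝ (Fin d)) (hz : ‖z‖ ≤ r) :
    0 ≤ n / (volume (cubeW d n ∩ ((fun w => w + z) '' cubeW d n))).toReal - 1 ∧
      n / (volume (cubeW d n ∩ ((fun w => w + z) '' cubeW d n))).toReal - 1
        ≤ 4 * d * r * n ^ (-(1 : ℝ) / d) := by
  have hdpos : (0 : ℝ) < d := by positivity
  have hdne : (d : ℝ) ≠ 0 := hdpos.ne'
  have hd1 : (1 : ℝ) ≤ d := by exact_mod_cast hd
  have ha : (0 : ℝ) < n ^ ((1 : ℝ) / d) := Real.rpow_pos_of_pos hn _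
  have hra : r < n ^ ((1 : ℝ) / d) := by nlinarith
  -- coordinate bounds
  have hzi : ∀ i, |z i| ≤ r := by
    intro i
    refine le_trans ?_ hz
    rw [EuclideanSpace.norm_eq]
    have h1 : |z i| = Real.sqrt (‖z i‖ ^ 2) := by
      rw [Real.sqrt_sq_eq_abs]; simp
    rw [h1]
    apply Real.sqrt_le_sqrt
    exact Finset.single_le_sum (f := fun i => ‖z i‖ ^ 2) (fun i _ => by positivity)
      (Finset.mem_univ i)
  -- n = a ^ d
  have hnad : n = (n ^ ((1 : ℝ) / d)) ^ d := by
    rw [← Real.rpow_natCast (n ^ ((1 : ℝ) / d)) d, ← Real.rpow_mul hn.le]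
    rw [one_div, inv_mul_cancel₀ hdne, Real.rpow_one]
  -- the intersection set
  have hset : cubeW d n ∩ ((fun w => w + z) '' cubeW d n)
      = ((MeasurableEquiv.toLp 2 (Fin d → ℝ)).symm) ⁻¹'
        (Set.univ.pi fun i => Set.Icc (max (-(n ^ ((1 : ℝ) / d) / 2)) (z i - n ^ ((1 : ℝ) / d) / 2))
          (min (n ^ ((1 : ℝ) / d) / 2) (z i + n ^ ((1 : ℝ) / d) / 2))) := by
    ext x
    simp only [cubeW, Set.mem_inter_iff, Set.mem_setOf_eq, Set.mem_image, Set.mem_preimage,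
      Set.mem_pi, Set.mem_univ, Set.mem_Icc, true_implies, max_le_iff, le_min_iff]
    constructor
    · rintro ⟨h1, w, hw, rfl⟩ i
      have h1i := abs_le.mp (h1 i)
      have hwi := abs_le.mp (hw i)
      have hx : ((MeasurableEquiv.toLp 2 (Fin d → ℝ)).symm) (w + z) i = w i + z i := rfl
      rw [hx]
      have hx2 : (w + z) i = w i + z i := rfl
      rw [hx2] at h1i
      exact ⟨⟨by linarith [h1i.1], by linarith [hwi.1]⟩, by linarith [h1i.2], by linarith [hwi.2]⟩
    · intro h
      have hx : ∀ i, ((MeasurableEquiv.toLp 2 (Fin d → ℝ)).symm) x i = x i := fun _ => rfl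
      refine ⟨fun i => abs_le.mpr ⟨?_, ?_⟩, x - z, fun i => ?_, by abel⟩
      · have := (h i).1.1; rw [hx i] at this; linarith
      · have := (h i).2.1; rw [hx i] at this; linarith
      · have hx2 : (x - z) i = x i - z i := rfl
        rw [hx2, abs_le]
        have h1 := (h i).1.2; have h2 := (h i).2.2
        rw [hx i] at h1 h2
        exact ⟨by linarith, by linarith⟩
  have hzia : ∀ i, |z i| ≤ n ^ ((1 : ℝ) / d) := fun i => (hzi i).trans hra.le
  have hnn : ∀ i : Fin d, (0 : ℝ) ≤ n ^ ((1 : ℝ) / d) - |z i| := fun i => by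
    linarith [hzi i]
  have hlen : ∀ i : Fin d, min (n ^ ((1 : ℝ) / d) / 2) (z i + n ^ ((1 : ℝ) / d) / 2)
      - max (-(n ^ ((1 : ℝ) / d) / 2)) (z i - n ^ ((1 : ℝ) / d) / 2)
      = n ^ ((1 : ℝ) / d) - |z i| := by
    intro i
    rcases le_total (z i) 0 with h | h
    · rw [abs_of_nonpos h, min_eq_right (by linarith), max_eq_left (by linarith)]; ring
    · rw [abs_of_nonneg h, min_eq_left (by linarith), max_eq_right (by linarith)]; ring
  have hvol : volume (cubeW d n ∩ ((fun w => w + z) '' cubeW d n))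
      = ENNReal.ofReal (∏ i : Fin d, (n ^ ((1 : ℝ) / d) - |z i|)) := by
    rw [hset, (EuclideanSpace.volume_preserving_symm_measurableEquiv_toLp (Fin d)).measure_preimage
      (MeasurableSet.univ_pi (fun i => measurableSet_Icc)).nullMeasurableSet,
      volume_pi_pi]
    rw [ENNReal.ofReal_prod_of_nonneg (fun i _ => hnn i)]
    exact (Finset.prod_congr rfl fun i _ => by rw [Real.volume_Icc, hlen i]).symm
  set a : ℝ := n ^ ((1 : ℝ) / d) with ha_def
  set v : ℝ := ∏ i : Fin d, (a - |z i|) with hv_def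
  have hvlb : (a - r) ^ d ≤ v := by
    calc (a - r) ^ d = ∏ _i : Fin d, (a - r) := by simp
      _ ≤ v := Finset.prod_le_prod (fun i _ => by linarith) (fun i _ => by linarith [hzi i])
  have hvub : v ≤ a ^ d := by
    calc v ≤ ∏ _i : Fin d, a := Finset.prod_le_prod (fun i _ => hnn i)
            (fun i _ => by linarith [abs_nonneg (z i)])
      _ = a ^ d := by simp
  have hvpos : 0 < v := lt_of_lt_of_le (pow_pos (by linarith) d) hvlb
  have htoReal : (volume (cubeW d n ∩ ((fun w => w + z) '' cubeW d n))).toReal = v := by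
    rw [hvol, ENNReal.toReal_ofReal hvpos.le]
  rw [htoReal]
  clear_value a v
  -- Bernoulli lower bound: (a - r)^d ≥ (3/4) a^d
  have hrdiv : r / a ≤ 1 := by rw [div_le_one ha]; linarith
  have hber : (1 : ℝ) + d * (-(r/a)) ≤ (1 + (-(r/a))) ^ d :=
    one_add_mul_le_pow (by linarith) d
  have hdra : (d : ℝ) * (r / a) ≤ 1/4 := by
    rw [mul_div_assoc', div_le_iff₀ ha]
    nlinarith
  have hv34 : (3/4 : ℝ) * a ^ d ≤ v := by
    refine le_trans ?_ hvlb
    have h1 : (a - r) ^ d = a ^ d * (1 - r/a) ^ d := by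
      rw [← mul_pow]
      congr 1
      field_simp
    rw [h1]
    have h2 : (3/4 : ℝ) ≤ (1 - r/a) ^ d := by
      rw [sub_eq_add_neg]
      nlinarith
    nlinarith [pow_pos ha d]
  obtain ⟨e, rfl⟩ : ∃ e, d = e + 1 := ⟨d - 1, (Nat.succ_pred_eq_of_pos hd).symm⟩
  have hdiff : a ^ (e + 1) - v ≤ ((e : ℝ) + 1) * r * a ^ e := by
    have h1 := aux_pow_sub_pow a (a - r) (by linarith) (by linarith) e
    have h2 : ((e : ℝ) + 1) * (a - (a - r)) * a ^ e = ((e : ℝ) + 1) * r * a ^ e := by ring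
    rw [h2] at h1
    linarith
  have hnv : 1 ≤ n / v := by
    rw [le_div_iff₀ hvpos, one_mul, hnad]
    exact hvub
  refine ⟨by linarith, ?_⟩
  have hexp : n ^ (-(1 : ℝ) / ((e : ℝ) + 1)) = a⁻¹ := by
    have h0 : (-(1 : ℝ)) / ((e : ℝ) + 1) = -((1 : ℝ) / ((e : ℝ) + 1)) := by ring
    rw [h0, Real.rpow_neg hn.le, ha_def]
    norm_num
  have hcast : ((e + 1 : ℕ) : ℝ) = (e : ℝ) + 1 := by push_cast; ring
  rw [show ((-(1 : ℝ)) / ((e + 1 : ℕ) : ℝ)) = (-(1 : ℝ)) / ((e : ℝ) + 1) by rw [hcast], hexp]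
  rw [div_sub' hvpos.ne', div_le_iff₀ hvpos]
  have hkey : n - v ≤ 4 * ((e : ℝ) + 1) * r * a⁻¹ * v := by
    have h1 : a * (a ^ (e + 1) - v) ≤ a * (((e : ℝ) + 1) * r * a ^ e) :=
      mul_le_mul_of_nonneg_left hdiff ha.le
    have h2 : a * (((e : ℝ) + 1) * r * a ^ e) = ((e : ℝ) + 1) * r * a ^ (e + 1) := by ring
    have h3 : ((e : ℝ) + 1) * r * a ^ (e + 1) ≤ 4 * ((e : ℝ) + 1) * r * ((3/4) * a ^ (e + 1)) := by
      nlinarith [pow_pos ha (e + 1), Nat.cast_nonneg (α := ℝ) e, mul_pos hr (pow_pos ha (e+1))]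
    have h4 : 4 * ((e : ℝ) + 1) * r * ((3/4) * a ^ (e + 1)) ≤ 4 * ((e : ℝ) + 1) * r * v := by
      apply mul_le_mul_of_nonneg_left hv34
      positivity
    have h5 : a * (n - v) ≤ 4 * ((e : ℝ) + 1) * r * v := by
      rw [hnad]
      push_cast
      nlinarith [h1, h2, h3, h4]
    calc n - v = a⁻¹ * (a * (n - v)) := by field_simp
      _ ≤ a⁻¹ * (4 * ((e : ℝ) + 1) * r * v) := by
          apply mul_le_mul_of_nonneg_left h5 (by positivity)
      _ = 4 * ((e : ℝ) + 1) * r * a⁻¹ * v := by ring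
  calc n - v * 1 = n - v := by ring
    _ ≤ 4 * ((e : ℝ) + 1) * r * a⁻¹ * v := hkey
    _ = 4 * ((e + 1 : ℕ) : ℝ) * r * a⁻¹ * v := by rw [hcast]
end
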